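/- Fix integers n ≥ 2 and 1 ≤ d < n. Let 1 ≤ i ≤ d and let w ∈ Λ^i ℝ^{d+1} satisfy π_−(w) ≠ 0. Then the image of the affine map f_w : ℝ^d → V_+ given by f_w(s) = π_+(u(s)w) is an affine subspace of V_+ of dimension at least i. -/

import Mathlib

open Matrix MeasureTheory Filter
open scoped ENNReal NNReal

noncomputable section

/-! ## Exterior powers in coordinates -/

/-- Index set for the standard wedge basis of Λ^k ℝ^m : k-element subsets of {0,…,m−1}. -/
abbrev Idx (m k : ℕ) := {J : Finset (Fin m) // J.card = k}

/-- Model for the k-th exterior power of ℝ^m, with its sup norm w.r.t. the wedge basis. -/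
abbrev Lam (m k : ℕ) := Idx m k → ℝ

/-- Increasing enumeration of a k-element subset of Fin m. -/
def finsetEmb {m k : ℕ} (J : Idx m k) : Fin k → Fin m := fun a => (J.1.orderIsoOfFin J.2 a : Fin m)

/-- Action of an m×m matrix on the k-th exterior power, in the standard wedge basis
(given by the k×k minors). -/
def extPow {m k : ℕ} (g : Matrix (Fin m) (Fin m) ℝ) (v : Lam m k) : Lam m k :=
  fun J => ∑ K : Idx m k, (g.submatrix (finsetEmb J) (finsetEmb K)).det * v K

/-- The wedge product v₁ ∧ ⋯ ∧ v_k of k vectors in ℝ^m, in coordinates. -/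
def wedge {m k : ℕ} (vs : Fin k → (Fin m → ℝ)) : Lam m k :=
  fun J => (Matrix.of fun a b : Fin k => vs b (finsetEmb J a)).det

/-- The wedge product of k integer vectors. -/
def wedgeInt {m k : ℕ} (vs : Fin k → (Fin m → ℤ)) : Lam m k :=
  wedge (fun j i => (vs j i : ℝ))

/-- The projection π_i of Λ^k ℝ^m onto the span of the wedges e_J having exactly i factors
among e_0,…,e_d (zero if i is out of range). -/
def proj (d : ℕ) {m k : ℕ} (i : ℕ) (v : Lam m k) : Lam m k :=
  fun J => if (J.1.filter (fun x : Fin m => (x : ℕ) ≤ d)).card = i then v J else 0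

/-- The projection π₊ of Λ^k ℝ^{d+1} onto the span of the wedges e_J with 0 ∈ J. -/
def projPlus {d k : ℕ} (v : Lam (d+1) k) : Lam (d+1) k :=
  fun J => if (0 : Fin (d+1)) ∈ J.1 then v J else 0

/-- The projection π₋ of Λ^k ℝ^{d+1} onto the span of the wedges e_J with 0 ∉ J. -/
def projMinus {d k : ℕ} (v : Lam (d+1) k) : Lam (d+1) k :=
  fun J => if (0 : Fin (d+1)) ∉ J.1 then v J else 0

/-! ## The homogeneous space X = SL_{n+1}(ℝ)/SL_{n+1}(ℤ) -/

noncomputable instance SLtop (m : ℕ) : TopologicalSpace (Matrix.SpecialLinearGroup (Fin m) ℝ) :=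
  TopologicalSpace.induced (fun g => (g : Matrix (Fin m) (Fin m) ℝ)) inferInstance

abbrev SLn (m : ℕ) := Matrix.SpecialLinearGroup (Fin m) ℝ

/-- Γ = SL_m(ℤ) viewed as a subgroup of SL_m(ℝ). -/
def Gamma (m : ℕ) : Subgroup (SLn m) :=
  (Matrix.SpecialLinearGroup.map (n := Fin m) (Int.castRingHom ℝ)).range

/-- The space X = SL_m(ℝ)/SL_m(ℤ). -/
abbrev Xsp (m : ℕ) := SLn m ⧸ Gamma m

/-! ## Matrices and one-parameter subgroups -/

lemma det_upperTri {m : ℕ} (M : Matrix (Fin m) (Fin m) ℝ)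
    (hoff : ∀ i j : Fin m, (j : ℕ) < (i : ℕ) → M i j = 0)
    (hdiag : ∀ i, M i i = 1) : M.det = 1 := by
  have hbt : M.BlockTriangular id := fun i j hij => hoff i j hij
  rw [Matrix.det_of_upperTriangular hbt]
  simp [hdiag]

/-- u(s): the identity matrix with s₁,…,s_d placed in the first row (columns 1,…,d). -/
def uMat (n d : ℕ) (s : Fin d → ℝ) : Matrix (Fin (n+1)) (Fin (n+1)) ℝ :=
  Matrix.of fun i j =>
    if i = j then 1
    else if h : i = 0 ∧ 1 ≤ (j : ℕ) ∧ (j : ℕ) ≤ d then s ⟨(j : ℕ) - 1, by omega⟩ else 0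

/-- u(s) as an element of SL_{n+1}(ℝ). -/
def uSL (n d : ℕ) (s : Fin d → ℝ) : SLn (n+1) :=
  ⟨uMat n d s, det_upperTri _ (fun i j hij => by
      simp only [uMat, Matrix.of_apply]
      rw [if_neg (by rintro rfl; omega), dif_neg (by rintro ⟨rfl, h1, h2⟩; simp at hij)])
    (fun i => by simp [uMat])⟩

/-- u(x): the identity matrix with x ∈ ℝ^n placed in the first row. -/
def uxMat (n : ℕ) (x : Fin n → ℝ) : Matrix (Fin (n+1)) (Fin (n+1)) ℝ :=
  Matrix.of fun i j =>
    if i = j then 1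
    else if h : i = 0 ∧ 1 ≤ (j : ℕ) then x ⟨(j : ℕ) - 1, by have := j.isLt; omega⟩ else 0

/-- u(x) as an element of SL_{n+1}(ℝ). -/
def uxSL (n : ℕ) (x : Fin n → ℝ) : SLn (n+1) :=
  ⟨uxMat n x, det_upperTri _ (fun i j hij => by
      simp only [uxMat, Matrix.of_apply]
      rw [if_neg (by rintro rfl; omega), dif_neg (by rintro ⟨rfl, h1⟩; simp at hij)])
    (fun i => by simp [uxMat])⟩

/-- u_A: the block unipotent matrix with I_{d+1}, I_{n−d} on the diagonal and A in the
upper-right block. -/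
def uAMat (n d : ℕ) (A : Matrix (Fin (d+1)) (Fin (n-d)) ℝ) : Matrix (Fin (n+1)) (Fin (n+1)) ℝ :=
  Matrix.of fun i j =>
    if i = j then 1
    else if h : (i : ℕ) ≤ d ∧ d + 1 ≤ (j : ℕ) then
      A ⟨(i : ℕ), by omega⟩ ⟨(j : ℕ) - (d+1), by have := j.isLt; omega⟩ else 0

/-- u_A as an element of SL_{n+1}(ℝ). -/
def uASL (n d : ℕ) (A : Matrix (Fin (d+1)) (Fin (n-d)) ℝ) : SLn (n+1) :=
  ⟨uAMat n d A, det_upperTri _ (fun i j hij => by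
      simp only [uAMat, Matrix.of_apply]
      rw [if_neg (by rintro rfl; omega), dif_neg (by rintro ⟨h1, h2⟩; omega)])
    (fun i => by simp [uAMat])⟩

lemma sum_ite_fin (m k : ℕ) (hk : k ≤ m) (a b : ℝ) :
    (∑ i : Fin m, if (i : ℕ) < k then a else b) = k * a + ((m - k : ℕ) : ℝ) * b := by
  rw [Fin.sum_univ_eq_sum_range (fun i => if i < k then a else b) m]
  rw [Finset.range_eq_Ico, ← Finset.sum_Ico_consecutive _ (Nat.zero_le k) hk]
  rw [Finset.sum_congr rfl (fun i hi => if_pos (Finset.mem_Ico.mp hi).2),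
    Finset.sum_congr rfl (g := fun _ => b)
      (fun i hi => if_neg (Nat.not_lt.mpr (Finset.mem_Ico.mp hi).1))]
  simp [Nat.card_Ico, mul_comm]

/-- A diagonal matrix with entries exp (f i), as an element of SL_m(ℝ). -/
def diagSL (m : ℕ) (f : Fin m → ℝ) (h : ∑ i, f i = 0) : SLn m :=
  ⟨Matrix.diagonal fun i => Real.exp (f i), by
    rw [Matrix.det_diagonal, ← Real.exp_sum, h, Real.exp_zero]⟩

/-- b_t = diag(e^{(n−d)t/((d+1)(n+1))}·I_{d+1}, e^{−t/(n+1)}·I_{n−d}) ∈ SL_{n+1}(ℝ). -/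
def btSL (n d : ℕ) (h : d ≤ n) (t : ℝ) : SLn (n+1) :=
  diagSL (n+1)
    (fun i => if (i : ℕ) < d + 1 then ((n : ℝ) - (d : ℝ)) * t / (((d : ℝ) + 1) * ((n : ℝ) + 1))
      else -t / ((n : ℝ) + 1))
    (by
      rw [sum_ite_fin (n+1) (d+1) (by omega)]
      have h1 : ((n + 1 - (d + 1) : ℕ) : ℝ) = (n : ℝ) - (d : ℝ) := by
        have h2 : (n + 1 - (d + 1) : ℕ) = n - d := by omega
        rw [h2, Nat.cast_sub h]
      rw [h1]
      have hd1 : ((d : ℝ) + 1) ≠ 0 := by positivity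
      have hn1 : ((n : ℝ) + 1) ≠ 0 := by positivity
      field_simp
      push_cast
      ring)

/-- c_t = diag(e^{dt/(d+1)}, e^{−t/(d+1)}·I_d, I_{n−d}) ∈ SL_{n+1}(ℝ). -/
def ctSL (n d : ℕ) (h : d ≤ n) (t : ℝ) : SLn (n+1) :=
  diagSL (n+1)
    (fun i => if (i : ℕ) = 0 then (d : ℝ) * t / ((d : ℝ) + 1)
      else if (i : ℕ) < d + 1 then -t / ((d : ℝ) + 1) else 0)
    (by
      rw [Fin.sum_univ_succ]
      simp only [Fin.val_zero, if_pos rfl, Fin.val_succ]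
      have key : ∀ i : Fin n,
          (if (i : ℕ) + 1 = 0 then (d : ℝ) * t / ((d : ℝ) + 1)
            else if (i : ℕ) + 1 < d + 1 then -t / ((d : ℝ) + 1) else 0)
          = (if (i : ℕ) < d then -t / ((d : ℝ) + 1) else 0) := by
        intro i
        rw [if_neg (by omega)]
        by_cases hc : (i : ℕ) < d
        · rw [if_pos (by omega), if_pos hc]
        · rw [if_neg (by omega), if_neg hc]
      rw [Finset.sum_congr rfl fun i _ => key i, sum_ite_fin n d h]
      have hd1 : ((d : ℝ) + 1) ≠ 0 := by positivity
      field_simp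
      simp only [↓reduceIte]
      field_simp
      try ring)

/-- g_t = diag(e^{nt/(n+1)}, e^{−t/(n+1)}·I_n) ∈ SL_{n+1}(ℝ). -/
def gtSL (n : ℕ) (t : ℝ) : SLn (n+1) :=
  diagSL (n+1)
    (fun i => if (i : ℕ) = 0 then (n : ℝ) * t / ((n : ℝ) + 1) else -t / ((n : ℝ) + 1))
    (by
      rw [Fin.sum_univ_succ]
      simp only [Fin.val_zero, if_pos rfl, Fin.val_succ]
      have key : ∀ i : Fin n,
          (if (i : ℕ) + 1 = 0 then (n : ℝ) * t / ((n : ℝ) + 1) else -t / ((n : ℝ) + 1))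
          = -t / ((n : ℝ) + 1) := fun i => if_neg (by omega)
      rw [Finset.sum_congr rfl fun i _ => key i, Finset.sum_const, Finset.card_univ,
        Fintype.card_fin, nsmul_eq_mul]
      have hn1 : ((n : ℝ) + 1) ≠ 0 := by positivity
      field_simp
      simp only [↓reduceIte]
      field_simp
      try ring)

/-- c_t = diag(e^{dt/(d+1)}, e^{−t/(d+1)}·I_d) as a (d+1)×(d+1) matrix. -/
def ctMat1 (d : ℕ) (t : ℝ) : Matrix (Fin (d+1)) (Fin (d+1)) ℝ :=
  Matrix.diagonal fun i =>
    if (i : ℕ) = 0 then Real.exp ((d : ℝ) * t / ((d : ℝ) + 1))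
    else Real.exp (-t / ((d : ℝ) + 1))

/-- c_t = diag(e^{dt/(d+1)}, e^{−t/(d+1)}·I_d, I_{n−d}) as an (n+1)×(n+1) matrix. -/
def ctMatN (n d : ℕ) (t : ℝ) : Matrix (Fin (n+1)) (Fin (n+1)) ℝ :=
  Matrix.diagonal fun i =>
    if (i : ℕ) = 0 then Real.exp ((d : ℝ) * t / ((d : ℝ) + 1))
    else if (i : ℕ) < d + 1 then Real.exp (-t / ((d : ℝ) + 1)) else 1

/-- The identification Fin (n+1) ≃ Fin (d+1) ⊕ Fin (n−d). -/
def finSplit (n d : ℕ) (h : d ≤ n) : Fin (n+1) ≃ Fin (d+1) ⊕ Fin (n-d) :=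
  (finCongr (by omega)).trans finSumFinEquiv.symm

/-- The embedding SL_{d+1}(ℝ) → SL_{n+1}(ℝ), h ↦ diag(h, I_{n−d}); its image is the
subgroup H of the paper. -/
def embedSL (n d : ℕ) (h : d ≤ n) (g : Matrix.SpecialLinearGroup (Fin (d+1)) ℝ) : SLn (n+1) :=
  ⟨Matrix.reindex (finSplit n d h).symm (finSplit n d h).symm
      (Matrix.fromBlocks (g : Matrix (Fin (d+1)) (Fin (d+1)) ℝ) 0 0
        (1 : Matrix (Fin (n-d)) (Fin (n-d)) ℝ)), by
    rw [Matrix.det_reindex_self, Matrix.det_fromBlocks_zero₂₁, Matrix.det_one, mul_one]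
    exact g.2⟩

/-! ## Height functions and exponents -/

/-- The cube I^d = [−1/2, 1/2]^d. -/
def Icube (d : ℕ) : Set (Fin d → ℝ) := Set.univ.pi fun _ => Set.Icc (-(1/2) : ℝ) (1/2)

/-- The function φ_ε on Λ^k ℝ^{n+1}, with values in [0,∞] (here δ_k = (n+1−k)k). -/
def phiFn (n d k : ℕ) (ε : ℝ) (v : Lam (n+1) k) : ℝ≥0∞ :=
  if ‖proj d 0 v + proj d (d+1) v‖ < ε ^ ((n + 1 - k) * k) then
    ⨅ i ∈ Finset.Icc 1 d,
      ENNReal.ofReal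
          (ε ^ ((((d : ℝ) + 1) / (((d : ℝ) + 1) - (i : ℝ))) * (((n + 1 - k) * k : ℕ) : ℝ)))
        * ENNReal.ofReal ‖proj d i v‖ ^ (-(((d : ℝ) + 1) / (((d : ℝ) + 1) - (i : ℝ))))
  else 0

/-- v ∈ Λ^k ℝ^{n+1} is a y-integral vector: v = g(v₁ ∧ ⋯ ∧ v_k) for a representative g
of y and linearly independent integer vectors v₁,…,v_k. -/
def IsIntegralVec (n : ℕ) {k : ℕ} (y : Xsp (n+1)) (v : Lam (n+1) k) : Prop :=
  ∃ g : SLn (n+1), (QuotientGroup.mk g : Xsp (n+1)) = y ∧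
    ∃ w : Fin k → (Fin (n+1) → ℤ), LinearIndependent ℤ w ∧
      v = extPow (g : Matrix (Fin (n+1)) (Fin (n+1)) ℝ) (wedgeInt w)

/-- The Margulis height function α_ε^θ on X. -/
def alphaF (n d : ℕ) (ε θ : ℝ) (y : Xsp (n+1)) : ℝ≥0∞ :=
  ⨆ k ∈ Finset.Icc 1 n, ⨆ v : Lam (n+1) k, ⨆ _ : v ≠ 0 ∧ IsIntegralVec n y v, phiFn n d k ε v ^ θ

/-- The dynamical exponent ρ(y; b_t, α) = limsup_{t→∞} log α(b_t y) / t ∈ [−∞,∞]. -/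
def rhoExp (n d : ℕ) (h : d ≤ n) (α : Xsp (n+1) → ℝ≥0∞) (y : Xsp (n+1)) : EReal :=
  Filter.limsup (fun t : ℝ => ENNReal.log (α (btSL n d h t • y)) / (t : EReal)) Filter.atTop

/-- α̃_δ(y) = ∫₀^∞ e^{−δt} α(b_t y) dt. -/
def atilde (n d : ℕ) (h : d ≤ n) (δ : ℝ) (α : Xsp (n+1) → ℝ≥0∞) (y : Xsp (n+1)) : ℝ≥0∞ :=
  ∫⁻ t in Set.Ioi (0 : ℝ), ENNReal.ofReal (Real.exp (-δ * t)) * α (btSL n d h t • y)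

/-- α is Lipschitz with respect to the action of H = diag(SL_{d+1}(ℝ), I_{n−d}). -/
def LipschitzWrtH (n d : ℕ) (h : d ≤ n) (α : Xsp (n+1) → ℝ≥0∞) : Prop :=
  ∀ F : Set (SLn (n+1)), F ⊆ Set.range (embedSL n d h) → IsCompact F →
    ∃ C : ℝ, 1 ≤ C ∧ ∀ g ∈ F, ∀ y : Xsp (n+1), α (g • y) ≤ ENNReal.ofReal C * α y

/-- y ∈ X is g_t-divergent on average. -/
def gDivergentOnAvg (n : ℕ) (y : Xsp (n+1)) : Prop :=
  ∀ K : Set (Xsp (n+1)), IsCompact K →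
    Tendsto (fun N : ℕ => ((Set.ncard {l : ℕ | 1 ≤ l ∧ l ≤ N ∧ gtSL n l • y ∈ K} : ℝ) / N))
      atTop (nhds 0)

/-- The set B_x(M,t,m;N) of the paper (for x = y_A and the height function α̃ = α̃_δ). -/
def Bset (n d : ℕ) (h : d ≤ n) (δ : ℝ) (α : Xsp (n+1) → ℝ≥0∞) (yA : Xsp (n+1))
    (M t : ℝ) (m N : ℕ) : Set (Fin d → ℝ) :=
  {s : Fin d → ℝ | s ∈ Icube d ∧
    atilde n d h δ α ((gtSL n ((m : ℝ) * t) * uSL n d s) • yA) < ENNReal.ofReal M ∧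
    ∀ l : ℕ, 1 ≤ l → l ≤ N →
      ENNReal.ofReal M ≤ atilde n d h δ α ((gtSL n (((m : ℝ) + (l : ℝ)) * t) * uSL n d s) • yA)}

/-! ## Diophantine approximation -/

/-- x ∈ ℝ^n is a singular vector. -/
def IsSingular (n : ℕ) (x : Fin n → ℝ) : Prop :=
  ∀ ε : ℝ, 0 < ε → ∃ N₀ : ℝ, ∀ N : ℝ, N₀ ≤ N → ∃ q : Fin n → ℤ, q ≠ 0 ∧ ∃ p : ℤ,
    |(∑ i, (q i : ℝ) * x i) - (p : ℝ)| ≤ ε * N ^ (-(n : ℝ)) ∧ ‖q‖ ≤ N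

/-- The vector (s, s̃A) ∈ ℝ^n, where s̃ = (1, s₁, …, s_d). -/
def xvec (n d : ℕ) (h : d ≤ n) (A : Matrix (Fin (d+1)) (Fin (n-d)) ℝ) (s : Fin d → ℝ) :
    Fin n → ℝ :=
  fun i => Fin.append s (Matrix.vecMul (Fin.cons 1 s) A) (Fin.cast (Nat.add_sub_cancel' h).symm i)

/-- The set of exponents ω for which ‖Aq − p‖ ≤ ‖q‖^{−ω} has infinitely many solutions
q ∈ ℤ^{n−d} \ {0}, p ∈ ℤ^{d+1}. -/
def diophSet (n d : ℕ) (A : Matrix (Fin (d+1)) (Fin (n-d)) ℝ) : Set ℝ :=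
  {ω : ℝ | {qp : (Fin (n-d) → ℤ) × (Fin (d+1) → ℤ) | qp.1 ≠ 0 ∧
    ‖A.mulVec (fun i => (qp.1 i : ℝ)) - (fun i => (qp.2 i : ℝ))‖ ≤ ‖qp.1‖ ^ (-ω)}.Infinite}

/-- The Diophantine exponent ω(A) ∈ [−∞, +∞]. -/
def omegaExp (n d : ℕ) (A : Matrix (Fin (d+1)) (Fin (n-d)) ℝ) : EReal :=
  sSup (Real.toEReal '' diophSet n d A)

end

/-!
The first row of `u(s)` is `(1, s)`, and a minor of the identity matrix with its first row
replaced by `r` is linear in `r` as soon as the selected rows contain `0`. Hence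
`s ↦ π₊(u(s) w)` is the restriction of a linear map `r ↦ π₊(M_r w)` to the hyperplane
`r₀ = 1`, and its image is an affine subspace whose direction is the image of `r₀ = 0`.
Pick `K ∌ 0` with `w_K ≠ 0`. For `x, y ∈ K`, the coordinate of `π₊(M_{e_x} w)` at
`K \ {y} ∪ {0}` vanishes if `x ≠ y` (the minors have two equal rows `e_x`) and is `± w_K` if
`x = y` (only the minor with columns `K` survives), so these `i` vectors are independent.
-/

open Function

namespace Matrix

variable {ι m n α R : Type*}

theorem submatrix_updateRow_of_injective [DecidableEq ι] [DecidableEq m] (M : Matrix m n α)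
    (r : n → α) {f : ι → m} (hf : Injective f) (g : ι → n) (a : ι) :
    (M.updateRow (f a) r).submatrix f g = (M.submatrix f g).updateRow a (r ∘ g) := by
  ext b c
  rcases eq_or_ne b a with rfl | hb
  · simp
  · simp [updateRow_ne hb, updateRow_ne (hf.ne hb)]

theorem updateRow_eq_submatrix [DecidableEq m] (M : Matrix m n α) (i j : m) :
    M.updateRow i (M j) = M.submatrix (update id i j) id := by
  ext b c
  rcases eq_or_ne b i with rfl | hb
  · simp
  · simp [hb]

variable [CommRing R] [Fintype ι] [DecidableEq ι] [DecidableEq m]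

theorem det_submatrix_updateRow_add (M : Matrix m n R) {f : ι → m} (hf : Injective f)
    (g : ι → n) {i₀ : m} (hi₀ : i₀ ∈ Set.range f) (r r' : n → R) :
    ((M.updateRow i₀ (r + r')).submatrix f g).det =
      ((M.updateRow i₀ r).submatrix f g).det + ((M.updateRow i₀ r').submatrix f g).det := by
  obtain ⟨a, rfl⟩ := hi₀
  simp only [submatrix_updateRow_of_injective _ _ hf]
  exact det_updateRow_add _ _ _ _

theorem det_submatrix_updateRow_smul (M : Matrix m n R) {f : ι → m} (hf : Injective f)
    (g : ι → n) {i₀ : m} (hi₀ : i₀ ∈ Set.range f) (c : R) (r : n → R) :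
    ((M.updateRow i₀ (c • r)).submatrix f g).det =
      c * ((M.updateRow i₀ r).submatrix f g).det := by
  obtain ⟨a, rfl⟩ := hi₀
  simp only [submatrix_updateRow_of_injective _ _ hf]
  exact det_updateRow_smul _ _ _ _

theorem det_one_submatrix_eq_zero_of_not_injective {g h : ι → m} (hg : ¬ Injective g) :
    ((1 : Matrix m m R).submatrix g h).det = 0 := by
  obtain ⟨a, b, hab, hne⟩ : ∃ a b, g a = g b ∧ a ≠ b := by
    simpa [Injective, not_forall] using hg
  exact det_zero_of_row_eq hne (funext fun c => by rw [submatrix_apply, submatrix_apply, hab])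

theorem det_one_submatrix_eq_zero_of_not_mem_range {g h : ι → m} {a : ι}
    (ha : g a ∉ Set.range h) : ((1 : Matrix m m R).submatrix g h).det = 0 :=
  det_eq_zero_of_row_eq_zero a fun b => by
    rw [submatrix_apply, one_apply, if_neg fun hab => ha ⟨b, hab.symm⟩]

theorem det_one_submatrix_ne_zero [Nontrivial R] {g h : ι → m} (hh : Injective h)
    (hgh : Set.range g = Set.range h) : ((1 : Matrix m m R).submatrix g h).det ≠ 0 := by
  choose σ hσ using fun a => hgh ▸ Set.mem_range_self (f := g) a
  have hσsurj : Surjective σ := fun b => by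
    obtain ⟨a, ha⟩ : h b ∈ Set.range g := hgh ▸ Set.mem_range_self b
    exact ⟨a, hh ((hσ a).trans ha)⟩
  let e := Equiv.ofBijective σ (Finite.surjective_iff_bijective.mp hσsurj)
  have : (1 : Matrix m m R).submatrix g h = (1 : Matrix ι ι R).submatrix e id := by
    rw [← submatrix_one h hh, submatrix_submatrix]
    ext a b
    exact congrArg (fun x => (1 : Matrix m m R) x (h b)) (hσ a).symm
  rw [this, det_permute, det_one, mul_one]
  exact ((Equiv.Perm.sign e).isUnit.map (Int.castRingHom R)).ne_zero

end Matrix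

theorem linearIndependent_of_apply_eq_zero_of_ne {ι κ R : Type*} [Fintype ι] [Ring R]
    [NoZeroDivisors R] {v : ι → κ → R} (f : ι → κ) (hdiag : ∀ a, v a (f a) ≠ 0)
    (hoff : ∀ a b, a ≠ b → v a (f b) = 0) : LinearIndependent R v := by
  refine Fintype.linearIndependent_iff.mpr fun c hc b => ?_
  have hb := congrFun hc (f b)
  simp only [Finset.sum_apply, Pi.smul_apply, smul_eq_mul, Pi.zero_apply] at hb
  rw [Finset.sum_eq_single b (fun a _ hab => by rw [hoff a b hab, mul_zero])
    (fun h => absurd (Finset.mem_univ b) h)] at hb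
  exact (mul_eq_zero.mp hb).resolve_right (hdiag b)

theorem LinearIndependent.fintype_card_le_finrank_of_forall_mem {ι R M : Type*} [Fintype ι]
    [DivisionRing R] [AddCommGroup M] [Module R M] [FiniteDimensional R M] {v : ι → M}
    (hv : LinearIndependent R v) {p : Submodule R M} (hp : ∀ a, v a ∈ p) :
    Fintype.card ι ≤ Module.finrank R p :=
  (LinearIndependent.of_comp p.subtype (v := fun a => (⟨v a, hp a⟩ : p)) hv)
    |>.fintype_card_le_finrank

theorem range_finCons_one_eq_mk' {R : Type*} [Ring R] (d : ℕ) :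
    Set.range (fun s : Fin d → R => (Fin.cons 1 s : Fin (d + 1) → R)) =
      AffineSubspace.mk' (Pi.single 0 1 : Fin (d + 1) → R)
        (LinearMap.ker (LinearMap.proj 0 : (Fin (d + 1) → R) →ₗ[R] R)) := by
  ext r
  simp only [Set.mem_range, SetLike.mem_coe, AffineSubspace.mem_mk', LinearMap.mem_ker,
    LinearMap.proj_apply, vsub_eq_sub, Pi.sub_apply, Pi.single_eq_same, sub_eq_zero]
  constructor
  · rintro ⟨s, rfl⟩
    rfl
  · intro h
    exact ⟨Fin.tail r, by rw [← h, Fin.cons_self_tail]⟩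

section ExteriorPower

variable {m k d i : ℕ}

theorem finsetEmb_injective (J : Idx m k) : Injective (finsetEmb J) :=
  (J.1.orderEmbOfFin J.2).injective

theorem range_finsetEmb (J : Idx m k) : Set.range (finsetEmb J) = J.1 :=
  Finset.range_orderEmbOfFin J.1 J.2

def Idx.exchange (J : Idx m k) {x y : Fin m} (hx : x ∈ J.1) (hy : y ∉ J.1) : Idx m k :=
  ⟨insert y (J.1.erase x), by
    rw [Finset.card_insert_of_notMem fun h => hy (Finset.mem_of_mem_erase h),
      Finset.card_erase_of_mem hx, Nat.sub_add_cancel (Finset.card_pos.mpr ⟨x, hx⟩), J.2]⟩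

theorem exists_zero_notMem_of_projMinus_ne_zero {w : Lam (d + 1) i} (hw : projMinus w ≠ 0) :
    ∃ K : Idx (d + 1) i, (0 : Fin (d + 1)) ∉ K.1 ∧ w K ≠ 0 := by
  obtain ⟨K, hK⟩ := Function.ne_iff.mp hw
  by_cases h0 : (0 : Fin (d + 1)) ∈ K.1
  · simp [projMinus, h0] at hK
  · exact ⟨K, h0, by simpa [projMinus, h0] using hK⟩

theorem uxMat_eq_updateRow (s : Fin d → ℝ) :
    uxMat d s = (1 : Matrix (Fin (d + 1)) (Fin (d + 1)) ℝ).updateRow 0 (Fin.cons 1 s) := by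
  ext r c
  rcases eq_or_ne r 0 with rfl | hr
  · refine Fin.cases (by simp [uxMat]) (fun j => ?_) c
    simp [uxMat, (Fin.succ_ne_zero j).symm]
  · simp [uxMat, Matrix.one_apply, hr]

def projPlusFirstRowMap (w : Lam (d + 1) i) : (Fin (d + 1) → ℝ) →ₗ[ℝ] Lam (d + 1) i where
  toFun r := projPlus (extPow ((1 : Matrix (Fin (d + 1)) (Fin (d + 1)) ℝ).updateRow 0 r) w)
  map_add' r r' := by
    ext J
    simp only [projPlus, extPow, Pi.add_apply]
    split_ifs with h0
    · rw [← Finset.sum_add_distrib]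
      refine Finset.sum_congr rfl fun K _ => ?_
      rw [Matrix.det_submatrix_updateRow_add _ (finsetEmb_injective J) _
        (by rwa [range_finsetEmb]), add_mul]
    · simp
  map_smul' c r := by
    ext J
    simp only [projPlus, extPow, Pi.smul_apply, smul_eq_mul, RingHom.id_apply]
    split_ifs with h0
    · rw [Finset.mul_sum]
      refine Finset.sum_congr rfl fun K _ => ?_
      rw [Matrix.det_submatrix_updateRow_smul _ (finsetEmb_injective J) _
        (by rwa [range_finsetEmb]), mul_assoc]
    · simp

theorem projPlusFirstRowMap_single_apply (w : Lam (d + 1) i) (x : Fin (d + 1))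
    {J : Idx (d + 1) i} (h0 : (0 : Fin (d + 1)) ∈ J.1) :
    projPlusFirstRowMap w (Pi.single x 1) J = ∑ K : Idx (d + 1) i,
      ((1 : Matrix (Fin (d + 1)) (Fin (d + 1)) ℝ).submatrix
        (update id 0 x ∘ finsetEmb J) (finsetEmb K)).det * w K := by
  have hrow :
      (Pi.single x 1 : Fin (d + 1) → ℝ) = (1 : Matrix (Fin (d + 1)) (Fin (d + 1)) ℝ) x :=
    funext fun c => Matrix.one_eq_pi_single.symm
  simp only [projPlusFirstRowMap, LinearMap.coe_mk, AddHom.coe_mk, projPlus, extPow, if_pos h0,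
    hrow, Matrix.updateRow_eq_submatrix, Matrix.submatrix_submatrix, id_comp]

theorem projPlusFirstRowMap_single_apply_eq_zero (w : Lam (d + 1) i) {x : Fin (d + 1)}
    {J : Idx (d + 1) i} (h0 : (0 : Fin (d + 1)) ∈ J.1) (hx : x ∈ J.1) (hx0 : x ≠ 0) :
    projPlusFirstRowMap w (Pi.single x 1) J = 0 := by
  rw [projPlusFirstRowMap_single_apply w x h0]
  refine Finset.sum_eq_zero fun K _ => ?_
  rw [Matrix.det_one_submatrix_eq_zero_of_not_injective, zero_mul]
  obtain ⟨a₀, ha₀⟩ : (0 : Fin (d + 1)) ∈ Set.range (finsetEmb J) := by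
    rwa [range_finsetEmb]
  obtain ⟨a, ha⟩ : x ∈ Set.range (finsetEmb J) := by rwa [range_finsetEmb]
  intro hinj
  have : a₀ = a := hinj (by simp [ha₀, ha, hx0])
  exact hx0 (ha.symm.trans (this ▸ ha₀))

theorem projPlusFirstRowMap_single_apply_exchange_ne_zero {w : Lam (d + 1) i}
    {K : Idx (d + 1) i} (h0 : (0 : Fin (d + 1)) ∉ K.1) (hwK : w K ≠ 0) {x : Fin (d + 1)}
    (hx : x ∈ K.1) : projPlusFirstRowMap w (Pi.single x 1) (Idx.exchange K hx h0) ≠ 0 := by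
  have h0J : (0 : Fin (d + 1)) ∈ (Idx.exchange K hx h0).1 := Finset.mem_insert_self _ _
  have hid : Set.EqOn (update id 0 x) id (K.1.erase x) := fun z hz =>
    update_of_ne (ne_of_mem_of_not_mem (Finset.mem_of_mem_erase hz) h0) _ _
  have hrange : Set.range (update id 0 x ∘ finsetEmb (Idx.exchange K hx h0)) = K.1 := by
    rw [Set.range_comp, range_finsetEmb, Idx.exchange, Finset.coe_insert, Set.image_insert_eq,
      hid.image_eq, Set.image_id, update_self, ← Finset.coe_insert, Finset.insert_erase hx]
  rw [projPlusFirstRowMap_single_apply w x h0J, Finset.sum_eq_single K]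
  · exact mul_ne_zero (Matrix.det_one_submatrix_ne_zero (finsetEmb_injective K)
      (hrange.trans (range_finsetEmb K).symm)) hwK
  · intro K' _ hK'
    obtain ⟨z, hzK, hzK'⟩ : ∃ z ∈ K.1, z ∉ K'.1 := by
      by_contra! h
      exact hK' (Subtype.ext (Finset.eq_of_subset_of_card_le h (by rw [K.2, K'.2])).symm)
    obtain ⟨a, ha⟩ : z ∈ Set.range (update id 0 x ∘ finsetEmb (Idx.exchange K hx h0)) :=
      hrange ▸ hzK
    rw [Matrix.det_one_submatrix_eq_zero_of_not_mem_range (a := a)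
      (by rwa [ha, range_finsetEmb]), zero_mul]
  · exact fun h => absurd (Finset.mem_univ K) h

theorem linearIndependent_projPlusFirstRowMap_single {w : Lam (d + 1) i}
    {K : Idx (d + 1) i} (h0 : (0 : Fin (d + 1)) ∉ K.1) (hwK : w K ≠ 0) :
    LinearIndependent ℝ fun x : K.1 => projPlusFirstRowMap w (Pi.single (x : Fin (d + 1)) 1) :=
  linearIndependent_of_apply_eq_zero_of_ne (fun x => Idx.exchange K x.2 h0)
    (fun x => projPlusFirstRowMap_single_apply_exchange_ne_zero h0 hwK x.2)
    fun x _ hxy => projPlusFirstRowMap_single_apply_eq_zero w (Finset.mem_insert_self _ _)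
      (Finset.mem_insert_of_mem (Finset.mem_erase.mpr ⟨Subtype.coe_ne_coe.mpr hxy, x.2⟩))
      (ne_of_mem_of_not_mem x.2 h0)

end ExteriorPower

theorem image_of_affine_map_dim_ge_general
    (d : ℕ)
    (i : ℕ)
    (w : Lam (d+1) i) (hw : projMinus w ≠ 0) :
    ∃ W : AffineSubspace ℝ (Lam (d+1) i),
      (W : Set (Lam (d+1) i)) =
        Set.range (fun s : Fin d → ℝ => projPlus (extPow (uxMat d s) w)) ∧
      i ≤ Module.finrank ℝ W.direction := by
  obtain ⟨K, h0K, hwK⟩ := exists_zero_notMem_of_projMinus_ne_zero hw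
  let F := projPlusFirstRowMap w
  let hyperplane := AffineSubspace.mk' (Pi.single 0 1 : Fin (d + 1) → ℝ)
    (LinearMap.ker (LinearMap.proj 0 : (Fin (d + 1) → ℝ) →ₗ[ℝ] ℝ))
  refine ⟨hyperplane.map F.toAffineMap, ?_, ?_⟩
  · rw [AffineSubspace.coe_map, ← range_finCons_one_eq_mk', ← Set.range_comp]
    simp only [uxMat_eq_updateRow]
    rfl
  · rw [AffineSubspace.map_direction, AffineSubspace.direction_mk', LinearMap.toAffineMap_linear]
    calc i = Fintype.card K.1 := by simp [K.2]
      _ ≤ _ := (linearIndependent_projPlusFirstRowMap_single h0K hwK)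
        |>.fintype_card_le_finrank_of_forall_mem
        fun x => Submodule.mem_map_of_mem (by simp [ne_of_mem_of_not_mem x.2 h0K])

/-- if π₋(w) ≠ 0, the image of the affine map f_w(s) = π₊(u(s)w) is an
affine subspace of dimension at least i. -/
theorem image_of_affine_map_dim_ge
    (n d : ℕ) (hn : 2 ≤ n) (hd : 1 ≤ d) (hdn : d < n)
    (i : ℕ) (hi1 : 1 ≤ i) (hid : i ≤ d)
    (w : Lam (d+1) i) (hw : projMinus w ≠ 0) :
    ∃ W : AffineSubspace ℝ (Lam (d+1) i),
      (W : Set (Lam (d+1) i)) =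
        Set.range (fun s : Fin d → ℝ => projPlus (extPow (uxMat d s) w)) ∧
      i ≤ Module.finrank ℝ W.direction :=
  image_of_affine_map_dim_ge_general d i w hw
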